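/- Let 2λ > 1 and n ≥ 1. Define the 2×2 matrices G(n) = [[√((2λ-1)_n/n!), 0], [√(n/(2λ-1))·√((2λ)_{n-1}/(n-1)!), √((2λ+1)_{n-1}/(n-1)!)]] and, for μ₁ > 0, W(n) = [[√((n+1)/(2λ+n-1)), 0], [-(1/μ₁)·√(2λ/(2λ-1))·√(1/((2λ+n-1)(2λ+n))), √(n/(2λ+n))]]. Then G(n)·diag(1, μ₁) = G(n+1)·diag(1, μ₁)·W(n); equivalently, W(n) = diag(1,μ₁)^{-1}·G(n+1)^{-1}·G(n)·diag(1,μ₁). -/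

import Mathlib

/-!
Entrywise, the diagonal entries reduce to the recursion `(y)_(k+1) = (y)_k (y + k)`. In the
lower-left entry every term is a multiple of `q = √((2λ)_(n-1) / ((2λ-1) n!))`, and the identity
reads `n q = (n+1) q - q`; the last term equals `q` because
`2λ (2λ+1)_n = (2λ)_(n+1) = (2λ)_(n-1) (2λ+n-1) (2λ+n)`.
-/

open Matrix

theorem ascPochhammer_succ_eval_left {S : Type*} [CommSemiring S] (k : ℕ) (y : S) :
    (ascPochhammer S (k + 1)).eval y = y * (ascPochhammer S k).eval (y + 1) := by
  simp [ascPochhammer_succ_left]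

theorem Real.sqrt_mul_sqrt_eq_mul_sqrt {a b c d : ℝ} (ha : 0 ≤ a) (hc : 0 ≤ c)
    (h : a * b = c ^ 2 * d) : √a * √b = c * √d := by
  rw [← Real.sqrt_mul ha, h, Real.sqrt_mul (sq_nonneg c), Real.sqrt_sq hc]

theorem sqrt_ascPochhammer_div_factorial_eq_succ {y : ℝ} (hy : 0 < y) (k : ℕ) :
    √((ascPochhammer ℝ k).eval y / k.factorial) =
      √((ascPochhammer ℝ (k + 1)).eval y / (k + 1).factorial) * √((k + 1) / (y + k)) := by
  have hP := ascPochhammer_pos (k + 1) y hy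
  have hyk : 0 < y + k := by positivity
  rw [← Real.sqrt_mul (by positivity), ascPochhammer_succ_eval, Nat.factorial_succ]
  congr 1
  push_cast
  field_simp

theorem sqrt_div_mul_sqrt_ascPochhammer {x : ℝ} (hx : 1 < x) (m : ℕ) :
    √((m + 1) / (x - 1)) * √((ascPochhammer ℝ m).eval x / m.factorial) =
      (m + 1) * √((ascPochhammer ℝ m).eval x / ((x - 1) * (m + 1).factorial)) := by
  have hP := ascPochhammer_pos m x (by linarith)
  have hx1 : 0 < x - 1 := by linarith
  refine Real.sqrt_mul_sqrt_eq_mul_sqrt (by positivity) (by positivity) ?_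
  rw [Nat.factorial_succ]
  push_cast
  field_simp

theorem sqrt_div_mul_sqrt_ascPochhammer_succ {x : ℝ} (hx : 1 < x) (m : ℕ) :
    √((m + 1 + 1) / (x - 1)) * √((ascPochhammer ℝ (m + 1)).eval x / (m + 1).factorial)
        * √((m + 1 + 1) / (x + m)) =
      (m + 1 + 1) * √((ascPochhammer ℝ m).eval x / ((x - 1) * (m + 1).factorial)) := by
  have hP := ascPochhammer_pos (m + 1) x (by linarith)
  have hx1 : 0 < x - 1 := by linarith
  have hxm : 0 < x + m := by positivity
  rw [← Real.sqrt_mul (by positivity)]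
  refine Real.sqrt_mul_sqrt_eq_mul_sqrt (by positivity) (by positivity) ?_
  rw [ascPochhammer_succ_eval]
  field_simp

theorem sqrt_ascPochhammer_add_one_mul_sqrt {x : ℝ} (hx : 1 < x) (m : ℕ) :
    √((ascPochhammer ℝ (m + 1)).eval (x + 1) / (m + 1).factorial) * √(x / (x - 1))
        * √(1 / ((x + m) * (x + m + 1))) =
      √((ascPochhammer ℝ m).eval x / ((x - 1) * (m + 1).factorial)) := by
  have hP := ascPochhammer_pos (m + 1) (x + 1) (by linarith)
  have hx1 : 0 < x - 1 := by linarith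
  have hxm : 0 < x + m := by positivity
  have hshift : x * (ascPochhammer ℝ (m + 1)).eval (x + 1) =
      (ascPochhammer ℝ m).eval x * (x + m) * (x + m + 1) := by
    rw [← ascPochhammer_succ_eval_left, ascPochhammer_succ_eval, ascPochhammer_succ_eval]
    push_cast
    ring
  rw [← Real.sqrt_mul (by positivity), ← Real.sqrt_mul (by positivity)]
  congr 1
  field_simp
  linear_combination hshift

/-- For `2λ > 1`, `n ≥ 1`, `μ₁ > 0`, the change-of-basis matrices
`G(n)` and the weighted-shift blocks `W(n)` (case `m = 1`) satisfy
`G(n)·diag(1,μ₁) = G(n+1)·diag(1,μ₁)·W(n)`,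
i.e. `W(n) = diag(1,μ₁)⁻¹·G(n+1)⁻¹·G(n)·diag(1,μ₁)`. -/
theorem shift_block_relation (lam : ℝ) (hlam : 1 < 2 * lam) (mu : ℝ) (hmu : 0 < mu)
    (G : ℕ → Matrix (Fin 2) (Fin 2) ℝ)
    (hG : ∀ n : ℕ,
      G n = !![Real.sqrt (Polynomial.eval (2 * lam - 1) (ascPochhammer ℝ n) / n.factorial), 0;
        Real.sqrt ((n : ℝ) / (2 * lam - 1))
          * Real.sqrt (Polynomial.eval (2 * lam) (ascPochhammer ℝ (n - 1)) / (n - 1).factorial),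
        Real.sqrt (Polynomial.eval (2 * lam + 1) (ascPochhammer ℝ (n - 1)) / (n - 1).factorial)])
    (W : ℕ → Matrix (Fin 2) (Fin 2) ℝ)
    (hW : ∀ n : ℕ,
      W n = !![Real.sqrt (((n : ℝ) + 1) / (2 * lam + n - 1)), 0;
        -(1 / mu) * Real.sqrt (2 * lam / (2 * lam - 1))
          * Real.sqrt (1 / ((2 * lam + n - 1) * (2 * lam + n))),
        Real.sqrt ((n : ℝ) / (2 * lam + n))])
    (n : ℕ) (hn : 1 ≤ n) :
    G n * Matrix.diagonal ![1, mu] = G (n + 1) * Matrix.diagonal ![1, mu] * W n := by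
  obtain ⟨m, rfl⟩ := Nat.exists_eq_add_of_le' hn
  rw [hG, hG, hW, diagonal_fin_two]
  simp only [mul_fin_two, Nat.add_sub_cancel, mul_zero, zero_mul, add_zero, zero_add]
  push_cast
  rw [show 2 * lam + ((m : ℝ) + 1) - 1 = 2 * lam + m by ring,
    show 2 * lam + ((m : ℝ) + 1) = 2 * lam + m + 1 by ring]
  ext i j
  fin_cases i <;> fin_cases j <;>
    simp only [Fin.zero_eta, Fin.mk_one, of_apply, cons_val_zero, cons_val_one, mul_one]
  · rw [sqrt_ascPochhammer_div_factorial_eq_succ (by linarith) (m + 1)]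
    push_cast
    ring_nf
  · rw [sqrt_div_mul_sqrt_ascPochhammer hlam, sqrt_div_mul_sqrt_ascPochhammer_succ hlam]
    linear_combination (norm := skip) sqrt_ascPochhammer_add_one_mul_sqrt hlam m
    field_simp
    ring
  · rw [sqrt_ascPochhammer_div_factorial_eq_succ (by linarith) m]
    ring_nf
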